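/- Let d ≥ 1 and let w_1,…,w_d ∈ ℝ^d satisfy dist(w_j, Span{w_1,…,w_{j−1}}) ≥ 1 for each 1 ≤ j ≤ d (with the span of the empty set being {0}). Let u_1,…,u_d be arbitrary real numbers. Then for every λ > 0, ∫_{ζ ∈ ℝ^d, |ζ| ≤ 1} exp(−λ Σ_{j=1}^d ‖ζ·w_j + u_j‖²) dζ = O_d((1+λ)^{−d/2}). -/

import Mathlib

open scoped RealInnerProductSpace ENNReal
open MeasureTheory Real

/-- Distance from a real number to the nearest integer. -/
noncomputable def distNearestInt (x : ℝ) : ℝ := |x - round x|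


/-- Distance from a real number to the nearest integer. -/

lemma distNearestInt_nonneg (x : ℝ) : 0 ≤ distNearestInt x := abs_nonneg _

lemma distNearestInt_int_add (x : ℝ) (k : ℤ) :
    distNearestInt (x + k) = distNearestInt x := by
  unfold distNearestInt
  rw [round_add_intCast]
  congr 1
  push_cast
  ring

lemma distNearestInt_sq (x : ℝ) (hx : x ∈ Set.Icc (-(1:ℝ)/2) (1/2)) :
    (distNearestInt x)^2 = x^2 := by
  unfold distNearestInt
  rw [sq_abs]
  obtain ⟨h1, h2⟩ := hx
  rcases lt_or_eq_of_le h2 with h2 | h2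
  · have : round x = 0 := by
      rw [round_eq, Int.floor_eq_zero_iff]
      constructor <;> simp <;> linarith
    simp [this]
  · subst h2
    norm_num [round_eq]

lemma measurable_distNearestInt : Measurable distNearestInt := by
  have h : distNearestInt = fun x => |Int.fract (x + 1/2) - 1/2| := by
    funext x
    unfold distNearestInt
    rw [round_eq, Int.fract]
    congr 1
    ring
  rw [h]
  exact (((measurable_id.add_const _).fract).sub_const _).abs

lemma intervalIntegrable_of_bounded {f : ℝ → ℝ} (hm : Measurable f)
    (h1 : ∀ x, |f x| ≤ 1) (a b : ℝ) : IntervalIntegrable f volume a b := by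
  constructor <;>
  · refine Integrable.mono' ((integrableOn_const_iff (C := (1:ℝ))).mpr (Or.inr measure_Ioc_lt_top))
      hm.aestronglyMeasurable (Filter.Eventually.of_forall fun x => by simpa using h1 x)

lemma meas_exp_dNI (lam a c : ℝ) :
    Measurable fun y : ℝ => Real.exp (-lam * (distNearestInt (a * y + c))^2) :=
  Real.measurable_exp.comp
    (((measurable_distNearestInt.comp ((measurable_id.const_mul a).add_const c)).pow_const 2).const_mul (-lam))

lemma abs_exp_dNI_le_one (lam : ℝ) (hlam : 0 < lam) (x : ℝ) :
    |Real.exp (-lam * (distNearestInt x)^2)| ≤ 1 := by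
  rw [abs_of_pos (Real.exp_pos _)]
  apply Real.exp_le_one_iff.mpr
  have := distNearestInt_nonneg x
  nlinarith

lemma oneD_pos (lam a c : ℝ) (hlam : 0 < lam) (ha : 1 ≤ a) :
    (∫ y in (-1:ℝ)..1, Real.exp (-lam * (distNearestInt (a * y + c))^2))
      ≤ 4 * ∫ x in (-(1:ℝ)/2)..(1/2), Real.exp (-lam * x^2) := by
  set f : ℝ → ℝ := fun x => Real.exp (-lam * (distNearestInt x)^2) with hf
  have ha0 : (0:ℝ) < a := by linarith
  have hfm : Measurable f :=
    Real.measurable_exp.comp ((measurable_distNearestInt.pow_const 2).const_mul (-lam))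
  have hfb : ∀ x, |f x| ≤ 1 := fun x => abs_exp_dNI_le_one lam hlam x
  have hfnn : ∀ x, 0 ≤ f x := fun x => (Real.exp_pos _).le
  have hfint : ∀ A B : ℝ, IntervalIntegrable f volume A B :=
    intervalIntegrable_of_bounded hfm hfb
  set m : ℤ := round (c - a) with hm
  set M : ℤ := round (c + a) with hM
  have hroundm := abs_sub_round (c - a)
  have hroundM := abs_sub_round (c + a)
  have hmle : (m:ℝ) ≤ c - a + 1/2 := by
    have := abs_le.mp hroundm; linarith [this.1]
  have hmge : c - a - 1/2 ≤ (m:ℝ) := by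
    have := abs_le.mp hroundm; linarith [this.2]
  have hMle : (M:ℝ) ≤ c + a + 1/2 := by
    have := abs_le.mp hroundM; linarith [this.1]
  have hMge : c + a - 1/2 ≤ (M:ℝ) := by
    have := abs_le.mp hroundM; linarith [this.2]
  have hmM : m ≤ M := by
    have : (m:ℝ) ≤ (M:ℝ) := by linarith
    exact_mod_cast this
  set N : ℕ := (M - m).toNat with hN
  have hNcast : (N:ℝ) = (M:ℝ) - (m:ℝ) := by
    have h : ((M - m).toNat : ℤ) = M - m := Int.toNat_of_nonneg (by omega)
    rw [← hN] at h
    exact_mod_cast congrArg (Int.cast : ℤ → ℝ) h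
  set seq : ℕ → ℝ := fun k => (m:ℝ) - 1/2 + k with hseq
  set G : ℝ := ∫ x in (-(1:ℝ)/2)..(1/2), Real.exp (-lam * x^2) with hG
  have hGnn : 0 ≤ G := intervalIntegral.integral_nonneg (by norm_num) (fun x _ => (Real.exp_pos _).le)
  -- substitution
  have step1 : (∫ y in (-1:ℝ)..1, f (a * y + c)) = a⁻¹ • ∫ x in (a*(-1)+c)..(a*1+c), f x :=
    intervalIntegral.integral_comp_mul_add f (ne_of_gt ha0) c
  -- enlarge interval
  have step2 : (∫ x in (a*(-1)+c)..(a*1+c), f x) ≤ ∫ x in (seq 0)..(seq (N+1)), f x := by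
    apply intervalIntegral.integral_mono_interval (μ := volume) (f := f)
    · simp only [hseq]; push_cast; linarith
    · linarith
    · simp only [hseq]; push_cast; linarith
    · exact Filter.Eventually.of_forall fun x => hfnn x
    · exact hfint _ _
  -- split into unit pieces
  have step3 : (∫ x in (seq 0)..(seq (N+1)), f x)
      = ∑ k ∈ Finset.range (N+1), ∫ x in (seq k)..(seq (k+1)), f x :=
    (intervalIntegral.sum_integral_adjacent_intervals (fun k _ => hfint _ _)).symm
  -- each piece equals G
  have step4 : ∀ k : ℕ, (∫ x in (seq k)..(seq (k+1)), f x) = G := by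
    intro k
    have h1 : (∫ x in (-(1:ℝ)/2)..(1/2), f (x + ((m:ℝ) + k)))
        = ∫ x in (seq k)..(seq (k+1)), f x := by
      rw [intervalIntegral.integral_comp_add_right f ((m:ℝ) + k)]
      congr 1 <;> · simp only [hseq]; push_cast; ring
    rw [← h1]
    apply intervalIntegral.integral_congr
    intro x hx
    have hx' : x ∈ Set.Icc (-(1:ℝ)/2) (1/2) := by
      rwa [Set.uIcc_of_le (by norm_num)] at hx
    show f (x + ((m:ℝ) + k)) = Real.exp (-lam * x^2)
    have heq : f (x + ((m:ℝ) + k)) = f x := by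
      simp only [hf]
      congr 1
      have : x + ((m:ℝ) + k) = x + ((m + (k:ℤ) : ℤ) : ℝ) := by push_cast; ring
      rw [this, distNearestInt_int_add]
    rw [heq]
    simp only [hf]
    rw [distNearestInt_sq x hx']
  have step5 : (∑ k ∈ Finset.range (N+1), ∫ x in (seq k)..(seq (k+1)), f x) = (N+1 : ℝ) * G := by
    rw [Finset.sum_congr rfl fun k _ => step4 k, Finset.sum_const, Finset.card_range,
      nsmul_eq_mul]
    push_cast; ring
  have hcount : (N + 1 : ℝ) ≤ 4 * a := by
    rw [hNcast]; linarith
  calc (∫ y in (-1:ℝ)..1, f (a * y + c))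
      = a⁻¹ • ∫ x in (a*(-1)+c)..(a*1+c), f x := step1
    _ ≤ a⁻¹ • ((N+1:ℝ) * G) := by
        rw [smul_eq_mul, smul_eq_mul]
        apply mul_le_mul_of_nonneg_left _ (inv_nonneg.mpr ha0.le)
        rw [← step5, ← step3]; exact step2
    _ ≤ a⁻¹ * (4 * a * G) := by
        rw [smul_eq_mul]
        apply mul_le_mul_of_nonneg_left _ (inv_nonneg.mpr ha0.le)
        exact mul_le_mul_of_nonneg_right hcount hGnn
    _ = 4 * G := by field_simp

lemma oneD (lam a c : ℝ) (hlam : 0 < lam) (ha : 1 ≤ |a|) :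
    (∫ y in (-1:ℝ)..1, Real.exp (-lam * (distNearestInt (a * y + c))^2))
      ≤ 4 * ∫ x in (-(1:ℝ)/2)..(1/2), Real.exp (-lam * x^2) := by
  rcases le_or_gt 0 a with h | h
  · rw [abs_of_nonneg h] at ha
    exact oneD_pos lam a c hlam ha
  · rw [abs_of_neg h] at ha
    have key : (∫ y in (-1:ℝ)..1, Real.exp (-lam * (distNearestInt (a * y + c))^2))
        = ∫ y in (-1:ℝ)..1, Real.exp (-lam * (distNearestInt ((-a) * y + c))^2) := by
      have := intervalIntegral.integral_comp_neg (a := (-1:ℝ)) (b := 1)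
        (fun y => Real.exp (-lam * (distNearestInt ((-a) * y + c))^2))
      simp only [neg_neg, neg_mul, mul_neg] at this ⊢
      rw [← this]
    rw [key]
    exact oneD_pos lam (-a) c hlam ha

lemma sqrt_four : Real.sqrt 4 = 2 := by
  rw [show (4:ℝ) = 2^2 by norm_num, Real.sqrt_sq (by norm_num)]

lemma Gbound (lam : ℝ) (hlam : 0 < lam) :
    (∫ x in (-(1:ℝ)/2)..(1/2), Real.exp (-lam * x^2)) ≤ 3 * (1+lam) ^ (-(1:ℝ)/2) := by
  have h1lam : (0:ℝ) < 1 + lam := by linarith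
  have hrw : (1+lam) ^ (-(1:ℝ)/2) = (Real.sqrt (1+lam))⁻¹ := by
    rw [neg_div, Real.rpow_neg h1lam.le, Real.sqrt_eq_rpow]
  rw [hrw]
  have hSpos : 0 < Real.sqrt (1+lam) := Real.sqrt_pos.mpr h1lam
  rcases le_or_gt lam 1 with h | h
  · have hG1 : (∫ x in (-(1:ℝ)/2)..(1/2), Real.exp (-lam * x^2)) ≤ 1 := by
      calc (∫ x in (-(1:ℝ)/2)..(1/2), Real.exp (-lam * x^2))
          ≤ ∫ _x in (-(1:ℝ)/2)..(1/2), (1:ℝ) := by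
            apply intervalIntegral.integral_mono_on (by norm_num)
            · exact (intervalIntegrable_of_bounded
                (((measurable_id.pow_const 2).const_mul (-lam)).exp)
                (fun x => by
                  rw [abs_of_pos (Real.exp_pos _)]
                  apply Real.exp_le_one_iff.mpr; nlinarith [sq_nonneg x]) _ _)
            · exact intervalIntegrable_const
            · intro x _
              apply Real.exp_le_one_iff.mpr; nlinarith [sq_nonneg x]
        _ = 1 := by simp; norm_num
    have hS2 : Real.sqrt (1+lam) ≤ 2 := by
      rw [← sqrt_four]
      exact Real.sqrt_le_sqrt (by linarith)
    calc (∫ x in (-(1:ℝ)/2)..(1/2), Real.exp (-lam * x^2)) ≤ 1 := hG1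
      _ ≤ 3 * (Real.sqrt (1+lam))⁻¹ := by
          rw [le_mul_inv_iff₀ hSpos]; linarith
  · have hInt : Integrable (fun x : ℝ => Real.exp (-lam * x^2)) := integrable_exp_neg_mul_sq hlam
    have hG2 : (∫ x in (-(1:ℝ)/2)..(1/2), Real.exp (-lam * x^2))
        ≤ ∫ x : ℝ, Real.exp (-lam * x^2) := by
      rw [intervalIntegral.integral_of_le (by norm_num)]
      exact setIntegral_le_integral hInt
        (Filter.Eventually.of_forall fun x => (Real.exp_pos _).le)
    rw [integral_gaussian] at hG2
    refine hG2.trans ?_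
    have hq : Real.sqrt (π / lam) ≤ Real.sqrt (9 / (1 + lam)) := by
      apply Real.sqrt_le_sqrt
      rw [div_le_div_iff₀ hlam h1lam]
      nlinarith [Real.pi_le_four]
    refine hq.trans ?_
    rw [Real.sqrt_div (by norm_num : (0:ℝ) ≤ 9), show Real.sqrt 9 = 3 by
      rw [show (9:ℝ) = 3^2 by norm_num, Real.sqrt_sq (by norm_num)], div_eq_mul_inv]

lemma oneD_lintegral (lam a c : ℝ) (hlam : 0 < lam) (ha : 1 ≤ |a|) :
    (∫⁻ y : ℝ, (Set.Icc (-1:ℝ) 1).indicator (fun _ => (1:ℝ≥0∞)) y *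
      ENNReal.ofReal (Real.exp (-lam * (distNearestInt (a*y+c))^2)))
      ≤ ENNReal.ofReal (12 * (1+lam) ^ (-(1:ℝ)/2)) := by
  set f : ℝ → ℝ := fun y => Real.exp (-lam * (distNearestInt (a*y+c))^2) with hf
  have hfm : Measurable f := meas_exp_dNI lam a c
  have h1 : (fun y : ℝ => (Set.Icc (-1:ℝ) 1).indicator (fun _ => (1:ℝ≥0∞)) y *
      ENNReal.ofReal (f y)) = (Set.Icc (-1:ℝ) 1).indicator (fun y => ENNReal.ofReal (f y)) := by
    funext y
    by_cases hy : y ∈ Set.Icc (-1:ℝ) 1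
    · simp [Set.indicator_of_mem hy]
    · simp [Set.indicator_of_notMem hy]
  rw [h1, lintegral_indicator measurableSet_Icc]
  have hInt : IntegrableOn f (Set.Icc (-1:ℝ) 1) := by
    refine Integrable.mono' ((integrableOn_const_iff (C := (1:ℝ))).mpr (Or.inr measure_Icc_lt_top))
      hfm.aestronglyMeasurable (Filter.Eventually.of_forall fun x => ?_)
    have := abs_exp_dNI_le_one lam hlam (a*x+c)
    simp only [hf, norm_eq_abs]
    convert this using 2
  rw [← ofReal_integral_eq_lintegral_ofReal hInt
    (Filter.Eventually.of_forall fun x => (Real.exp_pos _).le)]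
  apply ENNReal.ofReal_le_ofReal
  have heq : (∫ y in Set.Icc (-1:ℝ) 1, f y) = ∫ y in (-1:ℝ)..1, f y := by
    rw [intervalIntegral.integral_of_le (by norm_num : (-1:ℝ) ≤ 1),
      integral_Icc_eq_integral_Ioc]
  rw [heq]
  calc (∫ y in (-1:ℝ)..1, f y) ≤ 4 * ∫ x in (-(1:ℝ)/2)..(1/2), Real.exp (-lam * x^2) :=
        oneD lam a c hlam ha
    _ ≤ 4 * (3 * (1+lam) ^ (-(1:ℝ)/2)) := by
        apply mul_le_mul_of_nonneg_left (Gbound lam hlam) (by norm_num)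
    _ = 12 * (1+lam) ^ (-(1:ℝ)/2) := by ring

lemma peel (d : ℕ) (lam : ℝ) (hlam : 0 < lam) (R : Fin d → Fin d → ℝ) (u : Fin d → ℝ)
    (htri : ∀ j i : Fin d, j < i → R j i = 0) (hdiag : ∀ j, 1 ≤ |R j j|) :
    (∫⁻ t in Set.univ.pi (fun _ : Fin d => Set.Icc (-1:ℝ) 1),
        ENNReal.ofReal (Real.exp (-lam * ∑ j, (distNearestInt ((∑ i, R j i * t i) + u j))^2)))
      ≤ (ENNReal.ofReal (12 * (1+lam) ^ (-(1:ℝ)/2))) ^ d := by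
  classical
  set B : ℝ≥0∞ := ENNReal.ofReal (12 * (1+lam) ^ (-(1:ℝ)/2)) with hB
  set h : Fin d → (Fin d → ℝ) → ℝ≥0∞ := fun j t =>
    (Set.Icc (-1:ℝ) 1).indicator (fun _ => (1:ℝ≥0∞)) (t j) *
      ENNReal.ofReal (Real.exp (-lam * (distNearestInt ((∑ i, R j i * t i) + u j))^2)) with hh
  set F : (Fin d → ℝ) → ℝ≥0∞ := fun t => ∏ j, h j t with hF
  have hmeas_h : ∀ j, Measurable (h j) := by
    intro j
    apply Measurable.mul
    · exact (measurable_const.indicator measurableSet_Icc).comp (measurable_pi_apply j)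
    · apply ENNReal.measurable_ofReal.comp
      apply Measurable.exp
      apply Measurable.const_mul
      apply Measurable.pow_const
      apply measurable_distNearestInt.comp
      exact (Finset.measurable_sum Finset.univ
        (fun i _ => Measurable.const_mul (f := fun x : Fin d → ℝ => x i) (measurable_pi_apply i) (R j i))).add_const (u j)
  have hmeasF : Measurable F := Finset.measurable_prod Finset.univ fun j _ => hmeas_h j
  have hle1 : ∀ j t, h j t ≤ 1 := by
    intro j t
    simp only [hh]
    calc _ ≤ 1 * ENNReal.ofReal (Real.exp (-lam * (distNearestInt ((∑ i, R j i * t i) + u j))^2)) := by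
          apply mul_le_mul_left
          exact Set.indicator_le_self' (fun _ _ => zero_le_one) _
      _ ≤ 1 * 1 := by
          apply mul_le_mul_right
          rw [show (1:ℝ≥0∞) = ENNReal.ofReal 1 by simp]
          apply ENNReal.ofReal_le_ofReal
          apply Real.exp_le_one_iff.mpr
          nlinarith [sq_nonneg (distNearestInt ((∑ i, R j i * t i) + u j)), abs_nonneg ((∑ i, R j i * t i) + u j - round ((∑ i, R j i * t i) + u j))]
      _ = 1 := by simp
  have hprodne : ∀ (s : Finset (Fin d)) (t : Fin d → ℝ), (∏ j ∈ s, h j t) ≠ ⊤ := by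
    intro s t
    apply (lt_of_le_of_lt _ (by norm_num : (1:ℝ≥0∞) < ⊤)).ne
    calc (∏ j ∈ s, h j t) ≤ ∏ j ∈ s, 1 := Finset.prod_le_prod' fun j _ => hle1 j t
      _ = 1 := by simp
  -- the downward induction
  have main : ∀ n : ℕ, ∀ k : ℕ, d = k + n → ∀ t : Fin d → ℝ,
      (∫⋯∫⁻_(Finset.univ.filter (fun j : Fin d => k ≤ (j:ℕ))), F ∂(fun _ => (volume : Measure ℝ))) t
        ≤ B ^ n * ∏ j ∈ Finset.univ.filter (fun j : Fin d => (j:ℕ) < k), h j t := by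
    intro n
    induction n with
    | zero =>
      intro k hk t
      have hS : Finset.univ.filter (fun j : Fin d => k ≤ (j:ℕ)) = (∅ : Finset (Fin d)) := by
        apply Finset.filter_false_of_mem
        intro j _
        have := j.isLt
        omega
      have hT : Finset.univ.filter (fun j : Fin d => (j:ℕ) < k) = Finset.univ := by
        apply Finset.filter_true_of_mem
        intro j _
        have := j.isLt
        omega
      rw [hS, hT, lmarginal_empty]
      simp [hF]
    | succ n ih =>
      intro k hk t
      have hkd : k < d := by omega
      set kf : Fin d := ⟨k, hkd⟩ with hkf
      have hS : Finset.univ.filter (fun j : Fin d => k ≤ (j:ℕ))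
          = insert kf (Finset.univ.filter (fun j : Fin d => k + 1 ≤ (j:ℕ))) := by
        ext j
        simp only [Finset.mem_filter, Finset.mem_insert, Finset.mem_univ, true_and, hkf,
          Fin.ext_iff]
        omega
      have hknotin : kf ∉ Finset.univ.filter (fun j : Fin d => k + 1 ≤ (j:ℕ)) := by
        simp [hkf]
      rw [hS, lmarginal_insert F hmeasF hknotin]
      have hfilter : Finset.univ.filter (fun j : Fin d => (j:ℕ) < k + 1)
          = insert kf (Finset.univ.filter (fun j : Fin d => (j:ℕ) < k)) := by
        ext j
        simp only [Finset.mem_filter, Finset.mem_insert, Finset.mem_univ, true_and, hkf,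
          Fin.ext_iff]
        omega
      have hknotin2 : kf ∉ Finset.univ.filter (fun j : Fin d => (j:ℕ) < k) := by
        simp [hkf]
      -- pointwise bound of inner marginal
      have step1 : ∀ y : ℝ,
          (∫⋯∫⁻_(Finset.univ.filter (fun j : Fin d => k + 1 ≤ (j:ℕ))), F ∂(fun _ => (volume : Measure ℝ)))
            (Function.update t kf y)
          ≤ B ^ n * ((h kf (Function.update t kf y)) *
              ∏ j ∈ Finset.univ.filter (fun j : Fin d => (j:ℕ) < k), h j t) := by
        intro y
        refine (ih (k+1) (by omega) (Function.update t kf y)).trans ?_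
        rw [hfilter, Finset.prod_insert hknotin2]
        apply mul_le_mul_right
        apply mul_le_mul_right
        apply le_of_eq
        apply Finset.prod_congr rfl
        intro j hj
        have hjk : (j:ℕ) < k := (Finset.mem_filter.mp hj).2
        have hjne : j ≠ kf := by
          intro hcon
          rw [hcon, hkf] at hjk
          simp at hjk
        have hjlt : j < kf := by rw [Fin.lt_def]; exact hjk
        have hsum : (∑ i, R j i * Function.update t kf y i) = ∑ i, R j i * t i := by
          apply Finset.sum_congr rfl
          intro i _
          by_cases hi : i = kf
          · rw [hi, htri j kf hjlt]
            simp
          · rw [Function.update_of_ne hi]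
        simp only [hh]
        rw [Function.update_of_ne hjne, hsum]
      calc (∫⁻ y, (∫⋯∫⁻_(Finset.univ.filter (fun j : Fin d => k + 1 ≤ (j:ℕ))), F
              ∂(fun _ => (volume : Measure ℝ))) (Function.update t kf y))
          ≤ ∫⁻ y, B ^ n * ((h kf (Function.update t kf y)) *
              ∏ j ∈ Finset.univ.filter (fun j : Fin d => (j:ℕ) < k), h j t) :=
            lintegral_mono step1
        _ = B ^ n * (∏ j ∈ Finset.univ.filter (fun j : Fin d => (j:ℕ) < k), h j t) *
              ∫⁻ y, h kf (Function.update t kf y) := by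
            rw [← lintegral_const_mul']
            · congr 1
              funext y
              ring
            · exact ENNReal.mul_ne_top (ENNReal.pow_ne_top ENNReal.ofReal_ne_top) (hprodne _ _)
        _ ≤ B ^ n * (∏ j ∈ Finset.univ.filter (fun j : Fin d => (j:ℕ) < k), h j t) * B := by
            apply mul_le_mul_right
            -- rewrite the inner integrand into 1D shape
            have hrw : ∀ y : ℝ, h kf (Function.update t kf y)
                = (Set.Icc (-1:ℝ) 1).indicator (fun _ => (1:ℝ≥0∞)) y *
                  ENNReal.ofReal (Real.exp (-lam * (distNearestInt
                    (R kf kf * y + ((∑ i ∈ Finset.univ.erase kf, R kf i * t i) + u kf)))^2)) := by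
              intro y
              simp only [hh]
              congr 2
              · rw [Function.update_self]
              · congr 3
                rw [← Finset.add_sum_erase Finset.univ _ (Finset.mem_univ kf)]
                rw [Function.update_self]
                have : ∀ i ∈ Finset.univ.erase kf, R kf i * (Function.update t kf y i) = R kf i * t i := by
                  intro i hi
                  rw [Function.update_of_ne (Finset.ne_of_mem_erase hi)]
                rw [Finset.sum_congr rfl this]
                ring
            calc (∫⁻ y, h kf (Function.update t kf y))
                = ∫⁻ y : ℝ, (Set.Icc (-1:ℝ) 1).indicator (fun _ => (1:ℝ≥0∞)) y *
                    ENNReal.ofReal (Real.exp (-lam * (distNearestInt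
                      (R kf kf * y + ((∑ i ∈ Finset.univ.erase kf, R kf i * t i) + u kf)))^2)) := by
                  congr 1; funext y; exact hrw y
              _ ≤ B := oneD_lintegral lam (R kf kf) _ hlam (hdiag kf)
        _ = B ^ (n+1) * ∏ j ∈ Finset.univ.filter (fun j : Fin d => (j:ℕ) < k), h j t := by
            rw [pow_succ]
            ring
  -- assemble
  have box_meas : MeasurableSet (Set.univ.pi (fun _ : Fin d => Set.Icc (-1:ℝ) 1)) :=
    MeasurableSet.univ_pi fun _ => measurableSet_Icc
  have hindic : ∀ t : Fin d → ℝ,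
      (Set.univ.pi (fun _ : Fin d => Set.Icc (-1:ℝ) 1)).indicator
        (fun t => ENNReal.ofReal (Real.exp (-lam * ∑ j, (distNearestInt ((∑ i, R j i * t i) + u j))^2))) t
      = F t := by
    intro t
    by_cases ht : t ∈ Set.univ.pi (fun _ : Fin d => Set.Icc (-1:ℝ) 1)
    · rw [Set.indicator_of_mem ht]
      simp only [hF, hh]
      have : ∀ j : Fin d, (Set.Icc (-1:ℝ) 1).indicator (fun _ => (1:ℝ≥0∞)) (t j) = 1 := by
        intro j
        rw [Set.indicator_of_mem (ht j (Set.mem_univ j))]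
      rw [Finset.prod_congr rfl fun j _ => by rw [this j, one_mul]]
      have hex : (∏ j : Fin d, Real.exp (-lam * (distNearestInt ((∑ i, R j i * t i) + u j))^2))
          = Real.exp (-lam * ∑ j, (distNearestInt ((∑ i, R j i * t i) + u j))^2) := by
        rw [← Real.exp_sum, Finset.mul_sum]
      rw [← hex, ENNReal.ofReal_prod_of_nonneg (fun j _ => (Real.exp_pos _).le)]
    · rw [Set.indicator_of_notMem ht]
      have hnall : ¬ ∀ j : Fin d, t j ∈ Set.Icc (-1:ℝ) 1 := by
        intro hall; exact ht (Set.mem_univ_pi.mpr hall)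
      obtain ⟨j, hj⟩ := not_forall.mp hnall
      symm
      apply Finset.prod_eq_zero (Finset.mem_univ j)
      simp only [hh]
      rw [Set.indicator_of_notMem hj, zero_mul]
  calc (∫⁻ t in Set.univ.pi (fun _ : Fin d => Set.Icc (-1:ℝ) 1),
        ENNReal.ofReal (Real.exp (-lam * ∑ j, (distNearestInt ((∑ i, R j i * t i) + u j))^2)))
      = ∫⁻ t, F t := by
        rw [← lintegral_indicator box_meas]
        congr 1
        funext t
        exact hindic t
    _ ≤ B ^ d := by
        rw [show (volume : Measure (Fin d → ℝ)) = Measure.pi (fun _ => volume) from volume_pi]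
        rw [lintegral_eq_lmarginal_univ (fun _ => 0)]
        have h0 := main d 0 (by omega) (fun _ => 0)
        have hU : Finset.univ.filter (fun j : Fin d => 0 ≤ (j:ℕ)) = Finset.univ := by
          apply Finset.filter_true_of_mem; intro j _; omega
        have hE : Finset.univ.filter (fun j : Fin d => (j:ℕ) < 0) = ∅ := by
          apply Finset.filter_false_of_mem; intro j _; omega
        rw [hU, hE] at h0
        simpa using h0

open InnerProductSpace in
theorem lemma_dspan_shifted (d : ℕ) (hd : 1 ≤ d) :
    ∃ C : ℝ, 0 < C ∧
      ∀ (w : Fin d → EuclideanSpace ℝ (Fin d)) (u : Fin d → ℝ) (lam : ℝ), 0 < lam →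
      (∀ j : Fin d, 1 ≤ Metric.infDist (w j)
        ((Submodule.span ℝ (w '' {i : Fin d | i < j}) : Submodule ℝ (EuclideanSpace ℝ (Fin d)))
          : Set (EuclideanSpace ℝ (Fin d)))) →
      (∫ ζ in Metric.closedBall (0 : EuclideanSpace ℝ (Fin d)) 1,
          Real.exp (-lam * ∑ j, (distNearestInt (⟪ζ, w j⟫ + u j)) ^ 2))
        ≤ C * (1 + lam) ^ (-(d : ℝ) / 2) := by
  refine ⟨12 ^ d, by positivity, ?_⟩
  intro w u lam hlam hdist
  haveI : NeZero d := ⟨by omega⟩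
  haveI : IsWellFounded (Fin d) (fun x1 x2 => x1 < x2) := inferInstanceAs (WellFoundedLT (Fin d))
  have hrank : Module.finrank ℝ (EuclideanSpace ℝ (Fin d)) = Fintype.card (Fin d) := by
    simp [finrank_euclideanSpace_fin]
  set b : OrthonormalBasis (Fin d) ℝ (EuclideanSpace ℝ (Fin d)) := gramSchmidtOrthonormalBasis hrank w with hbdef
  -- Gram–Schmidt vectors have norm ≥ 1
  have hgs : ∀ j, 1 ≤ ‖gramSchmidt ℝ w j‖ := by
    intro j
    set p : EuclideanSpace ℝ (Fin d) :=
      ∑ i ∈ Finset.Iio j, ((ℝ ∙ gramSchmidt ℝ w i).starProjection (w j) :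
        EuclideanSpace ℝ (Fin d)) with hp
    have hgseq : gramSchmidt ℝ w j = w j - p := gramSchmidt_def ℝ w j
    have hpmem : p ∈ Submodule.span ℝ (w '' {i : Fin d | i < j}) := by
      rw [show (w '' {i : Fin d | i < j}) = w '' Set.Iio j from rfl,
        ← span_gramSchmidt_Iio ℝ w j]
      apply Submodule.sum_mem
      intro i hi
      have hIio : i ∈ Set.Iio j := Finset.mem_Iio.mp hi
      have h1 : (ℝ ∙ gramSchmidt ℝ w i) ≤ Submodule.span ℝ (gramSchmidt ℝ w '' Set.Iio j) := by
        rw [Submodule.span_singleton_le_iff_mem]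
        exact Submodule.subset_span ⟨i, hIio, rfl⟩
      exact h1 (Submodule.starProjection_apply_mem _ _)
    calc (1:ℝ) ≤ Metric.infDist (w j)
          ((Submodule.span ℝ (w '' {i : Fin d | i < j}) : Submodule ℝ (EuclideanSpace ℝ (Fin d)))
            : Set (EuclideanSpace ℝ (Fin d))) := hdist j
      _ ≤ dist (w j) p := Metric.infDist_le_dist_of_mem hpmem
      _ = ‖gramSchmidt ℝ w j‖ := by rw [dist_eq_norm, hgseq]
  have hgsne : ∀ j, gramSchmidt ℝ w j ≠ 0 := by
    intro j hcon
    have := hgs j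
    rw [hcon, norm_zero] at this
    linarith
  have hgsnne : ∀ j, gramSchmidtNormed ℝ w j ≠ 0 := by
    intro j
    unfold gramSchmidtNormed
    apply smul_ne_zero _ (hgsne j)
    simp only [ne_eq, inv_eq_zero, RCLike.ofReal_eq_zero, norm_eq_zero]
    exact hgsne j
  have hb : ∀ j, b j = gramSchmidtNormed ℝ w j :=
    fun j => gramSchmidtOrthonormalBasis_apply hrank (hgsnne j)
  -- the triangular matrix
  set R : Fin d → Fin d → ℝ := fun j i => ⟪b i, w j⟫ with hR
  have htri : ∀ j i : Fin d, j < i → R j i = 0 := by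
    intro j i hji
    exact gramSchmidtOrthonormalBasis_inv_triangular hrank w hji
  have hdiag : ∀ j, 1 ≤ |R j j| := by
    intro j
    have hinner : ⟪gramSchmidt ℝ w j, w j⟫ = ‖gramSchmidt ℝ w j‖ ^ 2 := by
      conv_lhs => rw [gramSchmidt_def' ℝ w j]
      rw [inner_add_right, real_inner_self_eq_norm_sq]
      have hzero : ⟪gramSchmidt ℝ w j, ∑ i ∈ Finset.Iio j,
          ((ℝ ∙ gramSchmidt ℝ w i).starProjection (w j) :
            EuclideanSpace ℝ (Fin d))⟫ = 0 := by
        rw [inner_sum]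
        apply Finset.sum_eq_zero
        intro i hi
        obtain ⟨r, hr⟩ := Submodule.mem_span_singleton.mp
          (Submodule.starProjection_apply_mem (ℝ ∙ gramSchmidt ℝ w i) (w j))
        rw [← hr, real_inner_smul_right,
          gramSchmidt_orthogonal ℝ w (Finset.mem_Iio.mp hi).ne', mul_zero]
      rw [hzero, add_zero]
    have hRjj : R j j = ‖gramSchmidt ℝ w j‖ := by
      rw [hR]
      simp only
      rw [hb j]
      unfold gramSchmidtNormed
      rw [real_inner_smul_left, hinner]
      have hpos : (0:ℝ) < ‖gramSchmidt ℝ w j‖ := by linarith [hgs j]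
      field_simp
      rfl
    rw [hRjj, abs_of_pos (by linarith [hgs j])]
    exact hgs j
  -- the isometry
  set φ := b.repr.symm with hφ
  set B1 := Metric.closedBall (0 : EuclideanSpace ℝ (Fin d)) 1 with hB1
  set f0 : EuclideanSpace ℝ (Fin d) → ℝ :=
    fun ζ => Real.exp (-lam * ∑ j, (distNearestInt (⟪ζ, w j⟫ + u j)) ^ 2) with hf0
  have hemb : MeasurableEmbedding ⇑φ := φ.toHomeomorph.measurableEmbedding
  have hpre : (⇑φ) ⁻¹' B1 = B1 := by
    ext t
    simp only [Set.mem_preimage, hB1, Metric.mem_closedBall, dist_zero_right,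
      LinearIsometryEquiv.norm_map]
  have hA : (∫ ζ in B1, f0 ζ) = ∫ t in B1, f0 (φ t) := by
    rw [← (b.measurePreserving_repr_symm).setIntegral_preimage_emb hemb f0 B1, hpre]
  -- coordinates
  have hBpt : ∀ t : EuclideanSpace ℝ (Fin d), ∀ j : Fin d,
      ⟪φ t, w j⟫ = ∑ i, R j i * t i := by
    intro t j
    rw [← OrthonormalBasis.sum_inner_mul_inner b (φ t) (w j)]
    apply Finset.sum_congr rfl
    intro i _
    have h1 : ⟪φ t, b i⟫ = t i := by
      rw [real_inner_comm, ← OrthonormalBasis.repr_apply_apply, hφ,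
        LinearIsometryEquiv.apply_symm_apply]
    rw [h1, hR]
    ring
  have hA2 : (∫ t in B1, f0 (φ t))
      = ∫ t in B1, Real.exp (-lam * ∑ j, (distNearestInt ((∑ i, R j i * t i) + u j)) ^ 2) := by
    apply setIntegral_congr_fun (Metric.isClosed_closedBall.measurableSet)
    intro t _
    simp only [hf0]
    congr 2
    apply Finset.sum_congr rfl
    intro j _
    rw [hBpt t j]
  -- move to pi space
  set ψ := MeasurableEquiv.toLp 2 (Fin d → ℝ) with hψdef
  have hψ : MeasurePreserving ψ := (EuclideanSpace.volume_preserving_symm_measurableEquiv_toLp (Fin d)).symm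
  set g' : (Fin d → ℝ) → ℝ :=
    fun x => Real.exp (-lam * ∑ j, (distNearestInt ((∑ i, R j i * x i) + u j)) ^ 2) with hg'
  have hg'm : Measurable g' := by
    apply Measurable.exp
    apply Measurable.const_mul
    apply Finset.measurable_sum
    intro j _
    apply Measurable.pow_const
    apply measurable_distNearestInt.comp
    exact (Finset.measurable_sum Finset.univ
      (fun i _ => Measurable.const_mul (f := fun x : Fin d → ℝ => x i) (measurable_pi_apply i) (R j i))).add_const (u j)
  have hC : (∫ t in B1, Real.exp (-lam * ∑ j, (distNearestInt ((∑ i, R j i * t i) + u j)) ^ 2))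
      = ∫ x in ψ ⁻¹' B1, g' x := by
    rw [← hψ.setIntegral_preimage_emb ψ.measurableEmbedding _ B1]
    rfl
  set box : Set (Fin d → ℝ) := Set.univ.pi (fun _ : Fin d => Set.Icc (-1:ℝ) 1) with hbox
  have hsub : ψ ⁻¹' B1 ⊆ box := by
    intro x hx
    have hnorm : ‖ψ x‖ ≤ 1 := by
      simpa [hB1, mem_closedBall_zero_iff] using hx
    intro i _
    have h1 : |x i| ≤ ‖ψ x‖ := by
      rw [EuclideanSpace.norm_eq, ← Real.sqrt_sq_eq_abs]
      apply Real.sqrt_le_sqrt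
      have h2 := Finset.single_le_sum
        (f := fun i' => ‖(ψ x : EuclideanSpace ℝ (Fin d)) i'‖^2)
        (fun i' _ => sq_nonneg _) (Finset.mem_univ i)
      simpa [Real.norm_eq_abs, sq_abs, hψdef] using h2
    have := abs_le.mp (h1.trans hnorm)
    constructor <;> linarith [this.1, this.2]
  have hboxvol : volume box < ⊤ := by
    rw [hbox, volume_pi_pi]
    apply ENNReal.prod_lt_top
    intro i _
    rw [Real.volume_Icc]
    exact ENNReal.ofReal_lt_top
  have hint_box : IntegrableOn g' box := by
    refine Integrable.mono' ((integrableOn_const_iff (C := (1:ℝ))).mpr (Or.inr hboxvol))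
      hg'm.aestronglyMeasurable (Filter.Eventually.of_forall fun x => ?_)
    rw [Real.norm_eq_abs, abs_of_pos (Real.exp_pos _)]
    apply Real.exp_le_one_iff.mpr
    have : (0:ℝ) ≤ ∑ j, (distNearestInt ((∑ i, R j i * x i) + u j)) ^ 2 :=
      Finset.sum_nonneg fun j _ => sq_nonneg _
    nlinarith
  have hmono : (∫ x in ψ ⁻¹' B1, g' x) ≤ ∫ x in box, g' x := by
    apply setIntegral_mono_set hint_box
      (Filter.Eventually.of_forall fun x => (Real.exp_pos _).le)
      (Filter.Eventually.of_forall hsub)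
  have hlint : (∫ x in box, g' x) = (∫⁻ x in box, ENNReal.ofReal (g' x)).toReal := by
    rw [integral_eq_lintegral_of_nonneg_ae
      (Filter.Eventually.of_forall fun x => (Real.exp_pos _).le)
      hg'm.aestronglyMeasurable]
  have hpeel := peel d lam hlam R u htri hdiag
  have hfinal : (∫⁻ x in box, ENNReal.ofReal (g' x)).toReal
      ≤ (12 * (1+lam) ^ (-(1:ℝ)/2)) ^ d := by
    have h1 : (∫⁻ x in box, ENNReal.ofReal (g' x))
        ≤ (ENNReal.ofReal (12 * (1+lam) ^ (-(1:ℝ)/2))) ^ d := hpeel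
    calc (∫⁻ x in box, ENNReal.ofReal (g' x)).toReal
        ≤ ((ENNReal.ofReal (12 * (1+lam) ^ (-(1:ℝ)/2))) ^ d).toReal :=
          ENNReal.toReal_mono (ENNReal.pow_ne_top ENNReal.ofReal_ne_top) h1
      _ = (12 * (1+lam) ^ (-(1:ℝ)/2)) ^ d := by
          rw [ENNReal.toReal_pow, ENNReal.toReal_ofReal (by positivity)]
  have hXpow : ((1+lam) ^ (-(1:ℝ)/2)) ^ d = (1+lam) ^ (-(d:ℝ)/2) := by
    rw [← Real.rpow_natCast ((1+lam) ^ (-(1:ℝ)/2)) d, ← Real.rpow_mul (by positivity)]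
    congr 1
    push_cast
    ring
  calc (∫ ζ in B1, f0 ζ)
      = ∫ x in ψ ⁻¹' B1, g' x := by rw [hA, hA2, hC]
    _ ≤ ∫ x in box, g' x := hmono
    _ = (∫⁻ x in box, ENNReal.ofReal (g' x)).toReal := hlint
    _ ≤ (12 * (1+lam) ^ (-(1:ℝ)/2)) ^ d := hfinal
    _ = 12 ^ d * (1+lam) ^ (-(d:ℝ)/2) := by rw [mul_pow, hXpow]
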